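/- For d + 1 ≤ n ≤ 2d, the number f_d(n) of minimal permutations of length n with d descents equals the sum of F_{a₁,…,a_{n−d}}(n) over all sequences (a₁,…,a_{n−d}) of integers with a_i ≥ 2 for all 1 ≤ i ≤ n−d and a₁ + a₂ + ⋯ + a_{n−d} = n. -/

import Mathlib

/-- `i` (1-based) is a descent of the word `w`, i.e. `1 ≤ i ≤ w.length - 1` and
`w_i > w_{i+1}` (1-based entries). -/
def DescentAt (w : List ℕ) (i : ℕ) : Prop :=
  1 ≤ i ∧ i + 1 ≤ w.length ∧ w.getD i 0 < w.getD (i - 1) 0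

instance (w : List ℕ) (i : ℕ) : Decidable (DescentAt w i) :=
  inferInstanceAs (Decidable (_ ∧ _ ∧ _))

/-- `i` (1-based) is an ascent of the word `w`. -/
def AscentAt (w : List ℕ) (i : ℕ) : Prop :=
  1 ≤ i ∧ i + 1 ≤ w.length ∧ w.getD (i - 1) 0 < w.getD i 0

instance (w : List ℕ) (i : ℕ) : Decidable (AscentAt w i) :=
  inferInstanceAs (Decidable (_ ∧ _ ∧ _))

/-- The set of descent positions of `w`. -/
def descents (w : List ℕ) : Finset ℕ :=
  (Finset.range w.length).filter (fun i => DescentAt w i)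

/-- `w` is a permutation of `[n] = {1,…,n}`, written as a word. -/
def IsPermWord (n : ℕ) (w : List ℕ) : Prop :=
  w.length = n ∧ w.Nodup ∧ ∀ x ∈ w, 1 ≤ x ∧ x ≤ n

/-- Two words of distinct entries are in the same relative order. -/
def SameRelOrder (u v : List ℕ) : Prop :=
  u.length = v.length ∧
    ∀ p q, p < u.length → q < u.length →
      (u.getD p 0 < u.getD q 0 ↔ v.getD p 0 < v.getD q 0)

/-- `σ ≺ w`: the word `w` contains the pattern `σ`, i.e. `w` has a subsequence
in the same relative order as `σ`. -/
def ContainsPattern (σ w : List ℕ) : Prop :=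
  ∃ s : List ℕ, s.Sublist w ∧ SameRelOrder s σ

/-- `w` is a minimal permutation with `d` descents: it has exactly `d` descents and
no strictly shorter permutation with exactly `d` descents occurs in it as a pattern. -/
def MinimalPerm (d : ℕ) (w : List ℕ) : Prop :=
  (descents w).card = d ∧
    ∀ (m : ℕ) (σ : List ℕ), IsPermWord m σ → m < w.length →
      (descents σ).card = d → ¬ ContainsPattern σ w

/-- `w` is a minimal permutation (with its own number of descents). -/
def IsMinimal (w : List ℕ) : Prop :=
  MinimalPerm (descents w).card w

/-- The set `𝓕_d(n)` of minimal permutations of length `n` with `d` descents. -/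
def minimalPerms (d n : ℕ) : Set (List ℕ) :=
  {w | IsPermWord n w ∧ MinimalPerm d w}

/-- `f_d(n) = |𝓕_d(n)|`. -/
noncomputable def fCount (d n : ℕ) : ℕ :=
  (minimalPerms d n).ncard

/-- `w` has ascent sequence `a`: `w` decomposes into maximal strictly decreasing
runs whose lengths, from left to right, are the entries of `a` (maximality is
expressed by the junctions between consecutive runs being ascents). -/
def HasAscentSeq (w a : List ℕ) : Prop :=
  ∃ bs : List (List ℕ), bs.flatten = w ∧ bs.map List.length = a ∧
    (∀ b ∈ bs, b ≠ [] ∧ List.Chain' (fun x y => x > y) b) ∧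
    List.Chain' (fun b c => ∃ x ∈ b.getLast?, ∃ y ∈ c.head?, x < y) bs

/-- The set `𝓕_{a₁,…,a_k}(n)` of minimal permutations of length `n` with
ascent sequence `a = (a₁,…,a_k)`. -/
def minimalPermsAsc (n : ℕ) (a : List ℕ) : Set (List ℕ) :=
  {w | IsPermWord n w ∧ IsMinimal w ∧ HasAscentSeq w a}

/-- `F_{a₁,…,a_k}(n) = |𝓕_{a₁,…,a_k}(n)|`. -/
noncomputable def FCount (n : ℕ) (a : List ℕ) : ℕ :=
  (minimalPermsAsc n a).ncard

/-- A standard filling of a given cell set by `1,…,N`: zero off the cells,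
a bijection from the cells onto `{1,…,N}`, strictly increasing along rows
(second coordinate) and columns (first coordinate). -/
def IsTableauOn (cell : ℕ → ℕ → Prop) (N : ℕ) (T : ℕ → ℕ → ℕ) : Prop :=
  (∀ r c, ¬ cell r c → T r c = 0) ∧
  (∀ r c, cell r c → 1 ≤ T r c ∧ T r c ≤ N) ∧
  (∀ r c r' c', cell r c → cell r' c' → T r c = T r' c' → r = r' ∧ c = c') ∧
  (∀ v, 1 ≤ v → v ≤ N → ∃ r c, cell r c ∧ T r c = v) ∧
  (∀ r c, cell r c → cell r (c + 1) → T r c < T r (c + 1)) ∧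
  (∀ r c, cell r c → cell (r + 1) c → T r c < T (r + 1) c)

/-- The cells of the skew shape `λ/μ` (rows indexed from `0` downward,
columns from `0` rightward): row `r` contains columns `μ_r ≤ c < λ_r`. -/
def skewCell (l m : List ℕ) (r c : ℕ) : Prop :=
  r < l.length ∧ m.getD r 0 ≤ c ∧ c < l.getD r 0

/-- A standard skew Young tableau of shape `λ/μ`. -/
def IsSkewSYT (l m : List ℕ) (T : ℕ → ℕ → ℕ) : Prop :=
  IsTableauOn (skewCell l m) (l.sum - m.sum) T

/-- `f^{λ/μ}`, the number of standard skew Young tableaux of shape `λ/μ`. -/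
noncomputable def skewSYTCount (l m : List ℕ) : ℕ :=
  Nat.card {T : ℕ → ℕ → ℕ // IsSkewSYT l m T}

/-- The row index of the top cell of column `c` in the 2-regular skew shape
with column lengths `a₁,…,a_k` (columns normalized so that the last column
starts in row `0`; consecutive columns overlap in exactly two rows). -/
def colTop (a : List ℕ) (c : ℕ) : ℕ :=
  (a.drop (c + 1)).sum - 2 * (a.length - 1 - c)

/-- The cells of the 2-regular skew shape with column lengths `a₁,…,a_k`:
column `c` occupies the `a_c` rows starting at `colTop a c`, so that any two
consecutive columns overlap in exactly two rows. -/
def twoRegCell (a : List ℕ) (r c : ℕ) : Prop :=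
  c < a.length ∧ colTop a c ≤ r ∧ r < colTop a c + a.getD c 0

/-- A 2-regular skew tableau with column lengths `a₁,…,a_k`: a standard filling
of the 2-regular skew shape by `1,…,a₁+⋯+a_k`. -/
def Is2RegularTableau (a : List ℕ) (T : ℕ → ℕ → ℕ) : Prop :=
  IsTableauOn (twoRegCell a) a.sum T

/-- `𝓜_{2n+1,2i}`: minimal permutations of length `2n+1` with `n+1` descents whose
unique pair of consecutive descents is `(2i-1, 2i)`. -/
def Mset (n i : ℕ) : Set (List ℕ) :=
  {w | IsPermWord (2 * n + 1) w ∧ MinimalPerm (n + 1) w ∧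
    DescentAt w (2 * i - 1) ∧ DescentAt w (2 * i) ∧
    ∀ j, DescentAt w j → DescentAt w (j + 1) → j = 2 * i - 1}

/-- Elementary Knuth transformations on words of distinct integers. -/
inductive KnuthStep : List ℕ → List ℕ → Prop
  | k1 (u v : List ℕ) (x y z : ℕ) (hxy : x < y) (hyz : y < z) :
      KnuthStep (u ++ [x, z, y] ++ v) (u ++ [z, x, y] ++ v)
  | k2 (u v : List ℕ) (x y z : ℕ) (hxy : x < y) (hyz : y < z) :
      KnuthStep (u ++ [y, x, z] ++ v) (u ++ [y, z, x] ++ v)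

/-- Knuth equivalence of words. -/
def KnuthEquiv : List ℕ → List ℕ → Prop := Relation.EqvGen KnuthStep

/-!
A word is the concatenation of its maximal decreasing runs, and its number of descents is its
length minus its number of runs. So a permutation of `[n]` has `d` descents exactly when its
ascent sequence has `n - d` entries, which always sum to `n`. In a minimal permutation every run
has length at least `2`: deleting a run `[x]` leaves its neighbours separated by an ascent
(`last < x < first`), which gives a shorter pattern with as many descents. Hence `𝓕_d(n)` is the
disjoint union of the sets `𝓕_a(n)` over the admissible ascent sequences `a`.
-/

theorem List.IsChain.and {α : Type*} {R S : α → α → Prop} {l : List α}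
    (hR : l.IsChain R) (hS : l.IsChain S) : l.IsChain fun a b => R a b ∧ S a b := by
  induction l with
  | nil => exact .nil
  | cons a l ih =>
    rw [List.isChain_cons] at hR hS ⊢
    exact ⟨fun b hb => ⟨hR.1 b hb, hS.1 b hb⟩, ih hR.2 hS.2⟩

def descentCount : List ℕ → ℕ
  | x :: y :: t => (if y < x then 1 else 0) + descentCount (y :: t)
  | _ => 0

theorem not_descentAt_zero (w : List ℕ) : ¬ DescentAt w 0 :=
  fun h => absurd h.1 (by decide)

theorem descentAt_cons_cons_one {x y : ℕ} {t : List ℕ} :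
    DescentAt (x :: y :: t) 1 ↔ y < x := by
  simp [DescentAt]

theorem descentAt_cons_add_one_add_one {x : ℕ} {w : List ℕ} {i : ℕ} :
    DescentAt (x :: w) (i + 1 + 1) ↔ DescentAt w (i + 1) := by
  simp only [DescentAt, List.length_cons, show i + 1 + 1 - 1 = i + 1 from rfl, List.getD_cons_succ,
    Nat.add_sub_cancel]
  omega

theorem card_descents_eq_descentCount : ∀ w : List ℕ, (descents w).card = descentCount w
  | [] => rfl
  | [x] => by simp [descents, DescentAt, descentCount]
  | x :: y :: t => by
    have ih := card_descents_eq_descentCount (y :: t)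
    simp only [descents, Finset.card_filter, List.length_cons] at ih ⊢
    rw [Finset.sum_range_succ'] at ih
    rw [Finset.sum_range_succ', Finset.sum_range_succ', descentCount, ← ih]
    simp only [zero_add, descentAt_cons_add_one_add_one, descentAt_cons_cons_one,
      not_descentAt_zero, if_false, add_zero]
    exact add_comm _ _

theorem descentCount_append {l m : List ℕ}
    (h : ∀ x ∈ l.getLast?, ∀ y ∈ m.head?, ¬ y < x) :
    descentCount (l ++ m) = descentCount l + descentCount m := by
  induction l with
  | nil => simp [descentCount]
  | cons x l ih =>
    rcases l with _ | ⟨y, l⟩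
    · rcases m with _ | ⟨z, m⟩
      · simp [descentCount]
      · simp_all [descentCount]
    · rw [List.cons_append, List.cons_append, descentCount, descentCount, ← List.cons_append,
        ih (by simpa only [List.getLast?_cons_cons] using h), add_assoc]

theorem descentCount_of_isChain {b : List ℕ} (h : b.IsChain fun x y => y < x) :
    descentCount b = b.length - 1 := by
  induction b with
  | nil => rfl
  | cons x b ih =>
    rcases b with _ | ⟨y, b⟩
    · rfl
    · rw [List.isChain_cons_cons] at h
      simp [descentCount, h.1, ih h.2, add_comm]

def decreasingRuns (w : List ℕ) : List (List ℕ) :=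
  w.splitBy fun x y => decide (y < x)

def ascentSeq (w : List ℕ) : List ℕ :=
  (decreasingRuns w).map List.length

theorem decreasingRuns_eq_iff {w : List ℕ} {bs : List (List ℕ)} :
    decreasingRuns w = bs ↔ w = bs.flatten ∧ [] ∉ bs ∧
      (∀ b ∈ bs, b.IsChain fun x y => y < x) ∧
      bs.IsChain fun b c => ∃ hb hc, ¬ c.head hc < b.getLast hb := by
  simp [decreasingRuns, List.splitBy_eq_iff]

theorem descentCount_add_length_decreasingRuns (w : List ℕ) :
    descentCount w + (decreasingRuns w).length = w.length := by
  obtain ⟨hw, hnil, hdec, hjun⟩ := decreasingRuns_eq_iff.1 (rfl : decreasingRuns w = _)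
  generalize decreasingRuns w = bs at *
  subst hw
  induction bs with
  | nil => rfl
  | cons b bs ih =>
    have hb : b ≠ [] := fun h => hnil (h ▸ List.mem_cons_self)
    have hjun_head : ∀ x ∈ b.getLast?, ∀ y ∈ bs.flatten.head?, ¬ y < x := by
      rcases bs with _ | ⟨c, bs⟩
      · simp
      have hc : c ≠ [] := fun h => hnil (h ▸ by simp)
      obtain ⟨_, _, hbc⟩ := (List.isChain_cons_cons.1 hjun).1
      simp only [List.getLast?_eq_some_getLast hb, List.flatten_cons,
        List.head?_append_of_ne_nil _ hc, List.head?_eq_some_head hc, Option.mem_def,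
        Option.some.injEq]
      rintro _ rfl _ rfl
      exact hbc
    have := ih (fun h => hnil (List.mem_cons_of_mem _ h))
      (fun c hc => hdec c (List.mem_cons_of_mem _ hc)) hjun.tail
    have := List.length_pos_iff.2 hb
    rw [List.flatten_cons, descentCount_append hjun_head,
      descentCount_of_isChain (hdec b List.mem_cons_self)]
    simp only [List.length_cons, List.length_append]
    omega

theorem card_descents_add_length_decreasingRuns (w : List ℕ) :
    (descents w).card + (decreasingRuns w).length = w.length := by
  rw [card_descents_eq_descentCount, descentCount_add_length_decreasingRuns]

theorem length_ascentSeq_add_card_descents (w : List ℕ) :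
    (ascentSeq w).length + (descents w).card = w.length := by
  rw [ascentSeq, List.length_map, add_comm, card_descents_add_length_decreasingRuns]

theorem sum_ascentSeq (w : List ℕ) : (ascentSeq w).sum = w.length := by
  rw [ascentSeq, ← List.length_flatten, ← (decreasingRuns_eq_iff.1 rfl).1]

theorem hasAscentSeq_iff {w a : List ℕ} (hw : w.Nodup) :
    HasAscentSeq w a ↔ ascentSeq w = a := by
  obtain ⟨hflat, hnil, hdec, hjun⟩ := decreasingRuns_eq_iff.1 (rfl : decreasingRuns w = _)
  constructor
  · rintro ⟨bs, rfl, rfl, hbs, hasc⟩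
    rw [ascentSeq, decreasingRuns_eq_iff.2]
    refine ⟨rfl, fun h => (hbs [] h).1 rfl, fun b hb => (hbs b hb).2, hasc.imp ?_⟩
    rintro b c ⟨x, hx, y, hy, hxy⟩
    refine ⟨List.ne_nil_of_mem (List.mem_of_mem_getLast? hx),
      List.ne_nil_of_mem (List.mem_of_mem_head? hy), ?_⟩
    rw [List.getLast_of_mem_getLast? hx, List.head_of_mem_head? hy]
    exact hxy.not_gt
  · rintro rfl
    have hdisj : (decreasingRuns w).IsChain List.Disjoint :=
      (List.nodup_flatten.1 (hflat ▸ hw)).2.isChain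
    refine ⟨decreasingRuns w, hflat.symm, rfl,
      fun b hb => ⟨fun h => hnil (h ▸ hb), hdec b hb⟩, (hjun.and hdisj).imp ?_⟩
    rintro b c ⟨⟨hb, hc, hle⟩, hbc⟩
    refine ⟨_, List.getLast_mem_getLast? hb, _, List.head_mem_head? hc,
      lt_of_le_of_ne (not_lt.1 hle) fun h => ?_⟩
    exact hbc (List.getLast_mem hb) (h ▸ List.head_mem hc)

theorem decreasingRuns_flatten_of_eq_append_singleton {w : List ℕ} {p q : List (List ℕ)}
    {x : ℕ} (h : decreasingRuns w = p ++ [x] :: q) :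
    decreasingRuns (p ++ q).flatten = p ++ q := by
  obtain ⟨-, hnil, hdec, hjun⟩ := decreasingRuns_eq_iff.1 h
  obtain ⟨hp, hxq, hpx⟩ := List.isChain_append.1 hjun
  obtain ⟨hxq, hq⟩ := List.isChain_cons.1 hxq
  refine decreasingRuns_eq_iff.2 ⟨rfl, by simp_all, fun b hb => hdec b ?_,
    List.isChain_append.2 ⟨hp, hq, fun b hb c hc => ?_⟩⟩
  · rcases List.mem_append.1 hb with hb | hb <;> simp [hb]
  obtain ⟨hb, _, hbx⟩ := hpx b hb [x] rfl
  obtain ⟨_, hc, hxc⟩ := hxq c hc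
  simp only [List.head_cons, List.getLast_singleton] at hbx hxc
  exact ⟨hb, hc, by omega⟩

theorem countP_le_lt_countP_le {s : List ℕ} {x y : ℕ} (hxy : x < y) (hy : y ∈ s) :
    s.countP (· ≤ x) < s.countP (· ≤ y) := by
  induction s with
  | nil => simp at hy
  | cons a s ih =>
    have hmono : s.countP (· ≤ x) ≤ s.countP (· ≤ y) :=
      List.countP_mono_left fun z _ hz => by simp only [decide_eq_true_eq] at hz ⊢; omega
    simp only [List.countP_cons, decide_eq_true_eq]
    rcases List.mem_cons.1 hy with rfl | hy
    · simp only [le_refl, if_true, not_le.2 hxy, if_false]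
      omega
    · have := ih hy
      split_ifs <;> omega

def standardize (s : List ℕ) : List ℕ :=
  s.map fun x => s.countP (· ≤ x)

theorem strictMonoOn_countP_le (s : List ℕ) :
    StrictMonoOn (fun x => s.countP (· ≤ x)) {x | x ∈ s} :=
  fun _ _ _ hy hxy => countP_le_lt_countP_le hxy hy

theorem sameRelOrder_standardize (s : List ℕ) : SameRelOrder s (standardize s) := by
  refine ⟨by simp [standardize], fun p q hp hq => ?_⟩
  simp only [standardize, List.getD_eq_getElem?_getD, List.getElem?_map]
  rw [List.getElem?_eq_getElem hp, List.getElem?_eq_getElem hq]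
  exact ((strictMonoOn_countP_le s).lt_iff_lt (List.getElem_mem hp) (List.getElem_mem hq)).symm

theorem isPermWord_standardize {s : List ℕ} (hs : s.Nodup) :
    IsPermWord s.length (standardize s) := by
  refine ⟨by simp [standardize],
    hs.map_on fun x hx y hy => (strictMonoOn_countP_le s).injOn hx hy, ?_⟩
  simp only [standardize, List.mem_map]
  rintro _ ⟨x, hx, rfl⟩
  exact ⟨List.countP_pos_iff.2 ⟨x, hx, by simp⟩, List.countP_le_length⟩

theorem mem_descents {w : List ℕ} {i : ℕ} : i ∈ descents w ↔ DescentAt w i := by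
  simp only [descents, Finset.mem_filter, Finset.mem_range, and_iff_right_iff_imp]
  exact fun h => h.2.1

theorem descents_eq_of_sameRelOrder {u v : List ℕ} (h : SameRelOrder u v) :
    descents u = descents v := by
  obtain ⟨hlen, hcmp⟩ := h
  ext i
  simp only [mem_descents, DescentAt, hlen, and_congr_right_iff]
  exact fun hi hv => hcmp i (i - 1) (by omega) (by omega)

theorem MinimalPerm.card_descents_ne_of_sublist {d : ℕ} {w s : List ℕ} (hm : MinimalPerm d w)
    (hw : w.Nodup) (hs : s.Sublist w) (hlen : s.length < w.length) : (descents s).card ≠ d :=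
  fun hd => hm.2 s.length (standardize s) (isPermWord_standardize (hs.nodup hw)) hlen
    (by rwa [← descents_eq_of_sameRelOrder (sameRelOrder_standardize s)])
    ⟨s, hs, sameRelOrder_standardize s⟩

theorem MinimalPerm.two_le_of_mem_ascentSeq {d : ℕ} {w : List ℕ} {k : ℕ}
    (hm : MinimalPerm d w) (hw : w.Nodup) (hk : k ∈ ascentSeq w) : 2 ≤ k := by
  obtain ⟨b, hb, rfl⟩ := List.mem_map.1 hk
  by_contra! hlt
  have hb0 : b ≠ [] := fun h => (decreasingRuns_eq_iff.1 rfl).2.1 (h ▸ hb)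
  obtain ⟨x, rfl⟩ : ∃ x, b = [x] :=
    List.length_eq_one_iff.1 (by have := List.length_pos_iff.2 hb0; omega)
  obtain ⟨p, q, hpq⟩ := List.append_of_mem hb
  have hw_eq : w = p.flatten ++ x :: q.flatten := by
    rw [(decreasingRuns_eq_iff.1 hpq).1]; simp
  have hsub : (p ++ q).flatten.Sublist w := by
    rw [hw_eq, List.flatten_append]
    exact (List.sublist_cons_self x _).append_left _
  have hlen : (p ++ q).flatten.length + 1 = w.length := by
    simp [hw_eq, add_assoc]
  refine hm.card_descents_ne_of_sublist hw hsub (by omega) ?_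
  have hcw := card_descents_add_length_decreasingRuns w
  have hcs := card_descents_add_length_decreasingRuns (p ++ q).flatten
  rw [hpq] at hcw
  rw [decreasingRuns_flatten_of_eq_append_singleton hpq] at hcs
  simp only [List.length_append, List.length_cons] at hcw hcs
  have := hm.1
  omega

theorem minimalPerm_and_ascentSeq_eq_iff {d n : ℕ} {w L : List ℕ} (hdn : d ≤ n)
    (hw : IsPermWord n w) (hL : L.length = n - d) :
    MinimalPerm d w ∧ ascentSeq w = L ↔ IsMinimal w ∧ HasAscentSeq w L := by
  rw [hasAscentSeq_iff hw.2.1, IsMinimal]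
  refine and_congr_left fun hwL => ⟨fun hm => hm.1 ▸ hm, fun hm => ?_⟩
  have := length_ascentSeq_add_card_descents w
  rw [hwL, hL, hw.1] at this
  rwa [show (descents w).card = d by omega] at hm

theorem setOf_isPermWord_finite (n : ℕ) : {w | IsPermWord n w}.Finite := by
  refine (List.finite_toSet (List.range' 1 n).permutations).subset fun w hw => ?_
  refine List.mem_permutations.2
    ((hw.2.1.subperm fun x hx => ?_).perm_of_length_le (by simp [hw.1]))
  have := hw.2.2 x hx
  simp only [List.mem_range'_1]
  omega

theorem mem_map_ofFn_antidiagonalTuple_filter {k n : ℕ} {L : List ℕ} :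
    L ∈ ((Finset.Nat.antidiagonalTuple k n).filter fun a => ∀ i, 2 ≤ a i).map
        ⟨List.ofFn, List.ofFn_injective⟩ ↔
      L.length = k ∧ L.sum = n ∧ ∀ x ∈ L, 2 ≤ x := by
  simp only [Finset.mem_map, Finset.mem_filter, Finset.Nat.mem_antidiagonalTuple,
    Function.Embedding.coeFn_mk]
  constructor
  · rintro ⟨a, ⟨rfl, h2⟩, rfl⟩
    simp [List.sum_ofFn, List.mem_ofFn, h2]
  · rintro ⟨rfl, rfl, h2⟩
    exact ⟨fun i : Fin L.length => L[(i : ℕ)], ⟨by rw [← List.sum_ofFn, List.ofFn_getElem],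
      fun i => h2 _ (List.getElem_mem _)⟩, List.ofFn_getElem⟩

theorem fCount_eq_sum_FCount_general (d n : ℕ) (h1 : d + 1 ≤ n) :
    fCount d n =
      ∑ a ∈ (Finset.Nat.antidiagonalTuple (n - d) n).filter (fun a => ∀ i, 2 ≤ a i),
        FCount n (List.ofFn a) := by
  classical
  set P := (setOf_isPermWord_finite n).toFinset
  have hP {w : List ℕ} : w ∈ P ↔ IsPermWord n w := Set.Finite.mem_toFinset _
  have hF : minimalPerms d n = ↑{w ∈ P | MinimalPerm d w} := by
    ext; simp [minimalPerms, hP]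
  have hFa (L : List ℕ) :
      minimalPermsAsc n L = ↑{w ∈ P | IsMinimal w ∧ HasAscentSeq w L} := by
    ext; simp [minimalPermsAsc, hP]
  rw [fCount, hF, Set.ncard_coe_finset, Finset.card_eq_sum_card_fiberwise (f := ascentSeq)
    (t := Finset.map ⟨List.ofFn, List.ofFn_injective⟩ _), Finset.sum_map]
  · refine Finset.sum_congr rfl fun a _ => ?_
    rw [FCount, hFa, Set.ncard_coe_finset, Finset.filter_filter]
    exact congrArg _ (Finset.filter_congr fun w hw =>
      minimalPerm_and_ascentSeq_eq_iff (by omega) (hP.1 hw) List.length_ofFn)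
  · intro w hw
    obtain ⟨hwP, hm⟩ := Finset.mem_filter.1 hw
    obtain ⟨hlen, hnd, -⟩ := hP.1 hwP
    have := length_ascentSeq_add_card_descents w
    rw [hm.1, hlen] at this
    exact mem_map_ofFn_antidiagonalTuple_filter.2
      ⟨by omega, (sum_ascentSeq w).trans hlen, fun k hk => hm.two_le_of_mem_ascentSeq hnd hk⟩

/-- for `d + 1 ≤ n ≤ 2d`, `f_d(n)` is the sum of `F_{a₁,…,a_{n-d}}(n)` over
all sequences `(a₁,…,a_{n-d})` with every `aᵢ ≥ 2` and `a₁ + ⋯ + a_{n-d} = n`. -/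
theorem fCount_eq_sum_FCount (d n : ℕ) (h1 : d + 1 ≤ n) (h2 : n ≤ 2 * d) :
    fCount d n =
      ∑ a ∈ (Finset.Nat.antidiagonalTuple (n - d) n).filter (fun a => ∀ i, 2 ≤ a i),
        FCount n (List.ofFn a) :=
  fCount_eq_sum_FCount_general d n h1
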